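/- For every α ∈ (0,1) and every integer k ≥ 0, one has |f̃_k(x) − x^(1/p)| ≤ max{ 2α, (1 − α_k)/(1 + α_k) } for all x ∈ [0,1]. -/

import Mathlib

/-- `mu p t = ((t - t^p)/((p-1)(1-t)))^(1/p)`, the real positive `p`th root. -/
noncomputable def mu (p : ℕ) (t : ℝ) : ℝ :=
  ((t - t ^ p) / (((p : ℝ) - 1) * (1 - t))) ^ ((1 : ℝ) / p)

/-- The sequence `α_0 = α`, `α_{k+1} = p α_k / ((p-1) μ(α_k) + μ(α_k)^(1-p) α_k^p)`. -/
noncomputable def alphaSeq (p : ℕ) (α : ℝ) : ℕ → ℝ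
  | 0 => α
  | k + 1 =>
      (p : ℝ) * alphaSeq p α k /
        (((p : ℝ) - 1) * mu p (alphaSeq p α k) +
          alphaSeq p α k ^ p / mu p (alphaSeq p α k) ^ (p - 1))

/-- `f_0(x) = 1`, `f_{k+1}(x) = (1/p)((p-1) μ(α_k) f_k(x) + x/(μ(α_k)^(p-1) f_k(x)^(p-1)))`. -/
noncomputable def fSeq (p : ℕ) (α : ℝ) : ℕ → ℝ → ℝ
  | 0, _ => 1
  | k + 1, x =>
      (1 / (p : ℝ)) *
        (((p : ℝ) - 1) * mu p (alphaSeq p α k) * fSeq p α k x +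
          x / (mu p (alphaSeq p α k) ^ (p - 1) * fSeq p α k x ^ (p - 1)))

/-- The scaled iterate `f̃_k(x) = (2 α_k/(1+α_k)) f_k(x)`. -/
noncomputable def ftilde (p : ℕ) (α : ℝ) (k : ℕ) (x : ℝ) : ℝ :=
  (2 * alphaSeq p α k / (1 + alphaSeq p α k)) * fSeq p α k x

open Real Set

lemma FTE_mu_B_pos (q : ℕ) {a : ℝ} (ha : a ∈ Set.Ioo (0:ℝ) 1) :
    0 < (a - a ^ (q+2)) / ((((q+2:ℕ):ℝ) - 1) * (1 - a)) := by
  obtain ⟨ha0, ha1⟩ := ha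
  have hq : a ^ q ≤ 1 := pow_le_one₀ ha0.le ha1.le
  have h1 : a ^ (q+2) < a := by
    have : a ^ (q+2) = a ^ q * (a * a) := by ring
    nlinarith [pow_pos ha0 q]
  have h2 : (0:ℝ) < (((q+2:ℕ):ℝ) - 1) * (1 - a) := by
    push_cast; nlinarith [Nat.cast_nonneg (α := ℝ) q]
  exact div_pos (by linarith) h2

lemma FTE_mu_pos (q : ℕ) {a : ℝ} (ha : a ∈ Set.Ioo (0:ℝ) 1) : 0 < mu (q+2) a :=
  Real.rpow_pos_of_pos (FTE_mu_B_pos q ha) _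

lemma FTE_mu_pow (q : ℕ) {a : ℝ} (ha : a ∈ Set.Ioo (0:ℝ) 1) :
    (mu (q+2) a) ^ (q+2) = (a - a ^ (q+2)) / ((((q+2:ℕ):ℝ) - 1) * (1 - a)) := by
  have hB := FTE_mu_B_pos q ha
  rw [mu, ← Real.rpow_natCast (((a - a ^ (q+2)) / ((((q+2:ℕ):ℝ) - 1) * (1 - a))) ^ ((1:ℝ)/((q+2:ℕ):ℝ))) (q+2),
    ← Real.rpow_mul hB.le]
  rw [one_div, inv_mul_cancel₀ (by positivity : ((q+2:ℕ):ℝ) ≠ 0), Real.rpow_one]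

lemma FTE_mu_gt (q : ℕ) {a : ℝ} (ha : a ∈ Set.Ioo (0:ℝ) 1) : a < mu (q+2) a := by
  obtain ⟨ha0, ha1⟩ := ha
  have hμ0 := FTE_mu_pos q ⟨ha0, ha1⟩
  refine lt_of_pow_lt_pow_left₀ (q+2) hμ0.le ?_
  rw [FTE_mu_pow q ⟨ha0, ha1⟩]
  have hden : (0:ℝ) < (((q+2:ℕ):ℝ) - 1) * (1 - a) := by
    push_cast; nlinarith [Nat.cast_nonneg (α := ℝ) q]
  rw [lt_div_iff₀ hden]
  -- Bernoulli: (1/a)^(q+1) ≥ 1 + (q+1)*(1-a)/a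
  have hm2 : (-2:ℝ) ≤ (1-a)/a := by
    have : (0:ℝ) ≤ (1-a)/a := div_nonneg (by linarith) ha0.le
    linarith
  have hb := one_add_mul_le_pow hm2 (q+1)
  have he : (1 + (1-a)/a) = 1/a := by field_simp; ring
  rw [he, one_div, inv_pow] at hb
  -- multiply by a^(q+1) > 0
  have hap : (0:ℝ) < a ^ (q+1) := pow_pos ha0 _
  have hb2 : a^(q+1) * (1 + ((q+1:ℕ):ℝ) * ((1-a)/a)) ≤ 1 := by
    have := mul_le_mul_of_nonneg_left hb hap.le
    rwa [mul_inv_cancel₀ hap.ne'] at this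
  -- now the strict step
  have key : a^(q+1) * (1 + ((q+1:ℕ):ℝ)*(1-a)) < 1 := by
    have hstep : a^(q+1) * (((q+1:ℕ):ℝ)*(1-a)) < a^(q+1) * (((q+1:ℕ):ℝ) * ((1-a)/a)) := by
      apply mul_lt_mul_of_pos_left _ hap
      have h1a : (1-a) < (1-a)/a := by
        rw [lt_div_iff₀ ha0]; nlinarith
      have : (0:ℝ) < ((q+1:ℕ):ℝ) := by positivity
      nlinarith
    nlinarith [hb2]
  push_cast at key ⊢
  have hpow : a^(q+2) = a * a^(q+1) := by ring
  nlinarith [mul_lt_mul_of_pos_left key ha0, hpow]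

lemma FTE_mu_identity (q : ℕ) {a : ℝ} (ha : a ∈ Set.Ioo (0:ℝ) 1) :
    a * (((q:ℝ)+1) * (mu (q+2) a) ^ (q+2) + 1) = ((q:ℝ)+1) * (mu (q+2) a) ^ (q+2) + a ^ (q+2) := by
  have hden : ((((q+2:ℕ):ℝ) - 1) * (1 - a)) ≠ 0 := by
    have : (0:ℝ) < (((q+2:ℕ):ℝ) - 1) * (1 - a) := by
      push_cast; nlinarith [Nat.cast_nonneg (α := ℝ) q, ha.2]
    exact this.ne'
  have h := FTE_mu_pow q ha
  rw [eq_div_iff hden] at h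
  push_cast at h ⊢
  linear_combination -h

lemma FTE_keylt (q : ℕ) {a M : ℝ} (ha : 0 < a) (hM : a < M) :
    ((q:ℝ)+2) * a * M ^ (q+1) < ((q:ℝ)+1) * M ^ (q+2) + a ^ (q+2) := by
  induction q with
  | zero => norm_num; nlinarith [sq_nonneg (M - a)]
  | succ q IH =>
    have hM0 : (0:ℝ) < M := ha.trans hM
    have F1 := mul_lt_mul_of_pos_right IH hM0
    have F2 : 0 ≤ (M^(q+2) - a^(q+2)) * (M - a) :=
      mul_nonneg (sub_nonneg.2 (pow_le_pow_left₀ ha.le hM.le _)) (sub_nonneg.2 hM.le)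
    push_cast
    have eM1 : M ^ (q+1) = M^q * M := by ring
    have eM2 : M ^ (q+2) = M^q * M * M := by ring
    have eM3 : M ^ (q+1+1) = M^q * M * M := by ring
    have eM4 : M ^ (q+1+2) = M^q * M * M * M := by ring
    have ea2 : a ^ (q+2) = a^q * a * a := by ring
    have ea3 : a ^ (q+1+2) = a^q * a * a * a := by ring
    simp only [eM1, eM2, eM3, eM4, ea2, ea3] at F1 F2 ⊢
    nlinarith [F1, F2]

lemma FTE_amgm (q : ℕ) {u x : ℝ} (hu : 0 < u) (hx : 0 ≤ x) :
    x ^ ((1:ℝ)/((q:ℝ)+2)) ≤ (1/((q:ℝ)+2)) * (((q:ℝ)+1) * u + x / u ^ (q+1)) := by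
  rcases hx.eq_or_lt with h | h
  · rw [← h, Real.zero_rpow (by positivity)]
    positivity
  · have hw1 : (0:ℝ) ≤ ((q:ℝ)+1)/((q:ℝ)+2) := by positivity
    have hw2 : (0:ℝ) ≤ 1/((q:ℝ)+2) := by positivity
    have hsum : ((q:ℝ)+1)/((q:ℝ)+2) + 1/((q:ℝ)+2) = 1 := by
      field_simp
      ring
    have hp2 : (0:ℝ) ≤ x / u ^ (q+1) := by positivity
    have key := Real.geom_mean_le_arith_mean2_weighted hw1 hw2 hu.le hp2 hsum
    have e1 : (x / u^(q+1)) ^ ((1:ℝ)/((q:ℝ)+2))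
        = x ^ ((1:ℝ)/((q:ℝ)+2)) / (u^(q+1)) ^ ((1:ℝ)/((q:ℝ)+2)) :=
      Real.div_rpow hx (by positivity : (0:ℝ) ≤ u^(q+1)) _
    have e2 : ((u^(q+1):ℝ)) ^ ((1:ℝ)/((q:ℝ)+2)) = u ^ (((q:ℝ)+1)/((q:ℝ)+2)) := by
      rw [← Real.rpow_natCast u (q+1), ← Real.rpow_mul hu.le]
      congr 1
      push_cast; ring
    rw [e1, e2] at key
    have hne : u ^ (((q:ℝ)+1)/((q:ℝ)+2)) ≠ 0 := (Real.rpow_pos_of_pos hu _).ne'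
    rw [mul_comm (u ^ (((q:ℝ)+1)/((q:ℝ)+2))) _, div_mul_cancel₀ _ hne] at key
    calc x ^ ((1:ℝ)/((q:ℝ)+2)) ≤ ((q:ℝ)+1)/((q:ℝ)+2) * u + 1/((q:ℝ)+2) * (x / u^(q+1)) := key
      _ = (1/((q:ℝ)+2)) * (((q:ℝ)+1) * u + x / u ^ (q+1)) := by ring

lemma FTE_convex_bound (q : ℕ) {c₁ c₂ l b y : ℝ} (hc₁ : 0 ≤ c₁) (hc₂ : 0 ≤ c₂)
    (hl : 0 < l) (h1 : l ≤ y) (h2 : y ≤ b) :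
    c₁ * y + c₂ / y ^ (q+1) ≤
      max (c₁ * l + c₂ / l ^ (q+1)) (c₁ * b + c₂ / b ^ (q+1)) := by
  have hy : 0 < y := lt_of_lt_of_le hl h1
  have hb : 0 < b := lt_of_lt_of_le hy h2
  have hg : ConvexOn ℝ (Set.Ioi (0:ℝ))
      (fun t : ℝ => c₁ * t ^ (1:ℤ) + c₂ * t ^ (-((q:ℤ)+1))) := by
    have A := (convexOn_zpow (𝕜 := ℝ) 1).smul hc₁
    have B := (convexOn_zpow (𝕜 := ℝ) (-((q:ℤ)+1))).smul hc₂
    have := A.add B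
    simpa [Pi.smul_apply, smul_eq_mul, Pi.add_def] using this
  have hmem : y ∈ segment ℝ l b := by
    rw [segment_eq_Icc (h1.trans h2)]
    exact ⟨h1, h2⟩
  have key := hg.le_on_segment (Set.mem_Ioi.mpr hl) (Set.mem_Ioi.mpr hb) hmem
  have conv : ∀ t : ℝ, 0 < t → c₁ * t ^ (1:ℤ) + c₂ * t ^ (-((q:ℤ)+1)) = c₁ * t + c₂ / t ^ (q+1) := by
    intro t ht
    rw [zpow_one, ← zpow_natCast t (q+1)]
    rw [zpow_neg, div_eq_mul_inv]
    push_cast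
    ring_nf
  rw [conv y hy, conv l hl, conv b hb] at key
  exact key

set_option maxHeartbeats 1000000 in
lemma FTE_invariant (q : ℕ) {α : ℝ} (hα : α ∈ Set.Ioo (0:ℝ) 1) (k : ℕ) :
    alphaSeq (q+2) α k ∈ Set.Ioo (0:ℝ) 1 ∧
      ∀ x ∈ Set.Icc (0:ℝ) 1, 0 < fSeq (q+2) α k x ∧
        x ^ ((1:ℝ)/((q:ℝ)+2)) ≤ fSeq (q+2) α k x ∧
        alphaSeq (q+2) α k * fSeq (q+2) α k x ≤ max (x ^ ((1:ℝ)/((q:ℝ)+2))) α := by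
  have hsub : q+2-1 = q+1 := rfl
  induction k with
  | zero =>
    refine ⟨hα, ?_⟩
    intro x hx
    simp only [fSeq, alphaSeq]
    refine ⟨one_pos, ?_, ?_⟩
    · calc x ^ ((1:ℝ)/((q:ℝ)+2)) ≤ 1 ^ ((1:ℝ)/((q:ℝ)+2)) :=
            Real.rpow_le_rpow hx.1 hx.2 (by positivity)
        _ = 1 := Real.one_rpow _
    · rw [mul_one]; exact le_max_right _ _
  | succ k IH =>
    obtain ⟨ha, hf⟩ := IH
    set a := alphaSeq (q+2) α k with ha_def
    set μ := mu (q+2) a with hμ_def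
    have hμ0 : 0 < μ := FTE_mu_pos q ha
    have hμgt : a < μ := FTE_mu_gt q ha
    have hid := FTE_mu_identity q ha
    rw [← hμ_def] at hid
    have hμp1 : (0:ℝ) < μ ^ (q+1) := pow_pos hμ0 _
    set D : ℝ := (((q+2:ℕ):ℝ) - 1) * μ + a ^ (q+2) / μ ^ (q+2-1) with hD_def
    have hD_eq : D = ((q:ℝ)+1) * μ + a^(q+2) / μ^(q+1) := by
      rw [hD_def, hsub]; push_cast; ring
    have hD0 : 0 < D := by
      rw [hD_eq]
      have h1 : (0:ℝ) < ((q:ℝ)+1) * μ := mul_pos (by positivity) hμ0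
      have h2 : (0:ℝ) ≤ a^(q+2)/μ^(q+1) :=
        div_nonneg (pow_nonneg ha.1.le _) (pow_nonneg hμ0.le _)
      linarith
    have hDgt : ((q:ℝ)+2) * a < D := by
      have hk := FTE_keylt q ha.1 hμgt
      have hDmul : D * μ^(q+1) = ((q:ℝ)+1)*μ^(q+2) + a^(q+2) := by
        rw [hD_eq]; field_simp; ring
      rw [← mul_lt_mul_iff_of_pos_right hμp1, hDmul]; exact hk
    have halpha : alphaSeq (q+2) α (k+1) = ((q:ℝ)+2) * a / D := by
      simp only [alphaSeq, ← ha_def, ← hμ_def, ← hD_def]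
      push_cast; ring
    clear_value a μ D
    constructor
    · rw [halpha]
      constructor
      · exact div_pos (mul_pos (by positivity) ha.1) hD0
      · rw [div_lt_one hD0]; exact hDgt
    intro x hx
    obtain ⟨hy0, hyl, hyu⟩ := hf x hx
    set y := fSeq (q+2) α k x with hy_def
    set s := x ^ ((1:ℝ)/((q:ℝ)+2)) with hs_def
    set m := max s α with hm_def
    clear_value y s m
    have hs0 : 0 ≤ s := by rw [hs_def]; exact Real.rpow_nonneg hx.1 _
    have hm0 : 0 < m := by rw [hm_def]; exact lt_of_lt_of_le hα.1 (le_max_right _ _)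
    have hμn : (0:ℝ) ≤ μ := hμ0.le
    have han : (0:ℝ) ≤ a := ha.1.le
    have hsm : s ≤ m := by rw [hm_def]; exact le_max_left _ _
    have hf1 : fSeq (q+2) α (k+1) x
        = (1/((q:ℝ)+2)) * (((q:ℝ)+1)*μ*y + x/(μ^(q+1) * y^(q+1))) := by
      simp only [fSeq, ← ha_def, ← hμ_def, ← hy_def, hsub]
      push_cast; ring
    have hyp1 : (0:ℝ) < y ^ (q+1) := pow_pos hy0 _
    have hpos : 0 < fSeq (q+2) α (k+1) x := by
      rw [hf1]
      have h1 : 0 < ((q:ℝ)+1)*μ*y := mul_pos (mul_pos (by positivity) hμ0) hy0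
      have h2 : 0 ≤ x/(μ^(q+1) * y^(q+1)) :=
        div_nonneg hx.1 (mul_nonneg (pow_nonneg hμn _) (pow_nonneg hy0.le _))
      exact mul_pos (by positivity) (by linarith)
    have hlow : s ≤ fSeq (q+2) α (k+1) x := by
      rw [hf1, hs_def]
      calc x ^ ((1:ℝ)/((q:ℝ)+2))
          ≤ (1/((q:ℝ)+2)) * (((q:ℝ)+1) * (μ*y) + x / (μ*y) ^ (q+1)) :=
            FTE_amgm q (mul_pos hμ0 hy0) hx.1
        _ = (1/((q:ℝ)+2)) * (((q:ℝ)+1)*μ*y + x/(μ^(q+1) * y^(q+1))) := by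
            rw [mul_pow]; ring
    refine ⟨hpos, hlow, ?_⟩
    rw [halpha, hf1]
    have hred : ((q:ℝ)+2)*a/D * ((1/((q:ℝ)+2)) * (((q:ℝ)+1)*μ*y + x/(μ^(q+1) * y^(q+1))))
        = a * (((q:ℝ)+1)*μ*y + x/(μ^(q+1) * y^(q+1))) / D := by
      field_simp
    rw [hred, div_le_iff₀ hD0]
    rcases hx.1.eq_or_lt with hx0 | hx0
    · -- x = 0
      have h2 : ((q:ℝ)+1)*μ*(a*y) ≤ ((q:ℝ)+1)*μ*m :=
        mul_le_mul_of_nonneg_left hyu (mul_nonneg (by positivity) hμn)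
      have h3 : 0 ≤ m * (a^(q+2)/μ^(q+1)) :=
        mul_nonneg hm0.le (div_nonneg (pow_nonneg han _) (pow_nonneg hμn _))
      rw [← hx0, zero_div, add_zero, hD_eq]
      linarith [h2, h3]
    · -- x > 0
      have hs0' : 0 < s := by rw [hs_def]; exact Real.rpow_pos_of_pos hx0 _
      have hsp : s ^ (q+2) = x := by
        rw [hs_def, ← Real.rpow_natCast (x ^ ((1:ℝ)/((q:ℝ)+2))) (q+2), ← Real.rpow_mul hx.1]
        push_cast
        rw [one_div, inv_mul_cancel₀ (by positivity : ((q:ℝ)+2) ≠ 0), Real.rpow_one]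
      have hyb : y ≤ m / a := by
        rw [le_div_iff₀ ha.1, mul_comm]; exact hyu
      have hcb := FTE_convex_bound q (c₁ := ((q:ℝ)+1)*μ) (c₂ := x/μ^(q+1))
        (mul_nonneg (by positivity) hμn) (div_nonneg hx.1 (pow_nonneg hμn _)) hs0' hyl hyb
      have hDalt : a * (((q:ℝ)+1)*μ + 1/μ^(q+1)) = D := by
        rw [hD_eq]
        field_simp
        linear_combination hid
      have hgs : a * (((q:ℝ)+1)*μ*s + (x/μ^(q+1))/s^(q+1)) = s * D := by
        rw [← hDalt, ← hsp]
        field_simp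
        ring
      have hgb : a * (((q:ℝ)+1)*μ*(m/a) + (x/μ^(q+1))/(m/a)^(q+1)) ≤ m * D := by
        have hxm : x ≤ m^(q+2) := by rw [← hsp]; exact pow_le_pow_left₀ hs0 hsm _
        have e : a * (((q:ℝ)+1)*μ*(m/a) + (x/μ^(q+1))/(m/a)^(q+1))
            = ((q:ℝ)+1)*μ*m + (a^(q+2)/μ^(q+1))*(x/m^(q+1)) := by
          rw [div_pow]
          field_simp [ha.1.ne', hμ0.ne', hm0.ne']
          ring
        have h5 : x/m^(q+1) ≤ m := by
          rw [div_le_iff₀ (pow_pos hm0 _)]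
          calc x ≤ m^(q+2) := hxm
            _ = m * m^(q+1) := by ring
        have h6 : (a^(q+2)/μ^(q+1))*(x/m^(q+1)) ≤ (a^(q+2)/μ^(q+1))*m :=
          mul_le_mul_of_nonneg_left h5 (div_nonneg (pow_nonneg han _) (pow_nonneg hμn _))
        rw [e, hD_eq]
        linarith [h6]
      have hHy : x/(μ^(q+1) * y^(q+1)) = (x/μ^(q+1))/y^(q+1) := by rw [div_div]
      rw [hHy]
      rcases max_choice (((q:ℝ)+1)*μ*s + (x/μ^(q+1))/s^(q+1))
          (((q:ℝ)+1)*μ*(m/a) + (x/μ^(q+1))/(m/a)^(q+1)) with hmx | hmx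
      · rw [hmx] at hcb
        calc a * (((q:ℝ)+1)*μ*y + (x/μ^(q+1))/y^(q+1))
            ≤ a * (((q:ℝ)+1)*μ*s + (x/μ^(q+1))/s^(q+1)) :=
              mul_le_mul_of_nonneg_left hcb ha.1.le
          _ = s * D := hgs
          _ ≤ m * D := mul_le_mul_of_nonneg_right hsm hD0.le
      · rw [hmx] at hcb
        calc a * (((q:ℝ)+1)*μ*y + (x/μ^(q+1))/y^(q+1))
            ≤ a * (((q:ℝ)+1)*μ*(m/a) + (x/μ^(q+1))/(m/a)^(q+1)) :=
              mul_le_mul_of_nonneg_left hcb ha.1.le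
          _ ≤ m * D := hgb

/-- **Combined bound.** For every `α ∈ (0,1)` and every `k ≥ 0`,
`|f̃_k(x) - x^(1/p)| ≤ max { 2α, (1-α_k)/(1+α_k) }` for all `x ∈ [0,1]`. -/
theorem ftilde_error_on_unit_interval (p : ℕ) (hp : 2 ≤ p)
    (α : ℝ) (hα : α ∈ Set.Ioo (0 : ℝ) 1) (k : ℕ) :
    ∀ x ∈ Set.Icc (0 : ℝ) 1,
      |ftilde p α k x - x ^ ((1 : ℝ) / p)| ≤
        max (2 * α) ((1 - alphaSeq p α k) / (1 + alphaSeq p α k)) := by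
  obtain ⟨q, rfl⟩ : ∃ q, p = q + 2 := ⟨p - 2, by omega⟩
  intro x hx
  obtain ⟨ha, hf⟩ := FTE_invariant q hα k
  obtain ⟨hy0, hyl, hyu⟩ := hf x hx
  have hcast : ((q+2:ℕ):ℝ) = (q:ℝ)+2 := by push_cast; ring
  rw [ftilde, hcast]
  set a := alphaSeq (q+2) α k with ha_def
  set y := fSeq (q+2) α k x with hy_def
  set s := x ^ ((1:ℝ)/((q:ℝ)+2)) with hs_def
  clear_value a y s
  have hs0 : 0 ≤ s := by rw [hs_def]; exact Real.rpow_nonneg hx.1 _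
  have hs1 : s ≤ 1 := by
    rw [hs_def]
    calc x ^ ((1:ℝ)/((q:ℝ)+2)) ≤ 1 ^ ((1:ℝ)/((q:ℝ)+2)) :=
          Real.rpow_le_rpow hx.1 hx.2 (by positivity)
      _ = 1 := Real.one_rpow _
  have h1a : (0:ℝ) < 1 + a := by have := ha.1; linarith
  rcases le_or_gt α s with hαs | hαs
  · -- α ≤ s: relative-error regime
    have hyu' : a * y ≤ s := by
      rwa [max_eq_left hαs] at hyu
    have e : 2 * a / (1 + a) * y - s = (2*(a*y) - s*(1+a))/(1+a) := by
      field_simp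
    rw [e, abs_div, abs_of_pos h1a]
    have hnum : |2*(a*y) - s*(1+a)| ≤ 1 - a := by
      rw [abs_le]
      constructor
      · nlinarith [mul_le_mul_of_nonneg_left hyl ha.1.le,
          mul_nonneg (sub_nonneg.2 hs1) (sub_nonneg.2 ha.2.le)]
      · nlinarith [mul_nonneg (sub_nonneg.2 hs1) (sub_nonneg.2 ha.2.le)]
    refine le_trans ?_ (le_max_right _ _)
    exact (div_le_div_iff_of_pos_right h1a).2 hnum
  · -- s < α: absolute-error regime
    have hyu' : a * y ≤ α := by
      rwa [max_eq_right hαs.le] at hyu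
    refine le_trans ?_ (le_max_left _ _)
    have hnn : 0 ≤ 2 * a / (1 + a) * y := by
      apply mul_nonneg _ hy0.le
      apply div_nonneg _ h1a.le
      have := ha.1; linarith
    have hub : 2 * a / (1 + a) * y ≤ 2 * α := by
      rw [div_mul_eq_mul_div, div_le_iff₀ h1a]
      nlinarith [hyu', hα.1, ha.1]
    rw [abs_le]
    constructor
    · nlinarith [hα.1]
    · nlinarith [hs0]
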